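/- Selection rule of the (q → 0)-Wigner–Eckart theorem (component identification): for natural numbers a, b and every pair (k, l) with k ≤ a and l ≤ b, setting l₀ = min(l, a − k), one has f̃^{k + l − l₀}(0, l₀) = some (k, l); that is, (k, l) lies in the connected component whose highest weight satisfies 2J = a + b − 2·min(l, a − k). (In spin language: the image state τ^j_m |j₁ m₁⟩, modeled by the crystal vector |j, m⟩ ⊗ |j₁, m₁⟩ with a = 2j, b = 2j₁, k = j − m, l = j₁ − m₁, lies in the irreducible representation J = j + j₁ − min(j₁ − m₁, j + m).) -/

import Mathlib

/-- Kashiwara's lowering operator `f̃` on the crystal tensor product `B_a ⊗ B_b`,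
modeled on pairs `(k, l)` of lowering-step counters (`k ≤ a`, `l ≤ b`):
`f̃(k,l) = (k+1, l)` if `a - k > l`; `f̃(k,l) = (k, l+1)` if `a - k ≤ l` and `l < b`;
`f̃(k,l) = none` otherwise. -/
def ftil (a b : ℕ) (p : ℕ × ℕ) : Option (ℕ × ℕ) :=
  if p.2 < a - p.1 then some (p.1 + 1, p.2)
  else if p.2 < b then some (p.1, p.2 + 1)
  else none

/-- Kashiwara's raising operator `ẽ` on the crystal tensor product `B_a ⊗ B_b`:
`ẽ(k,l) = (k-1, l)` if `a - k ≥ l` and `k > 0`; `ẽ(k,l) = (k, l-1)` if `a - k < l`;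
`ẽ(k,l) = none` otherwise. -/
def etil (a b : ℕ) (p : ℕ × ℕ) : Option (ℕ × ℕ) :=
  if p.2 ≤ a - p.1 ∧ 0 < p.1 then some (p.1 - 1, p.2)
  else if a - p.1 < p.2 then some (p.1, p.2 - 1)
  else none

/-- `n`-fold application of a partially defined crystal operator, propagating `none`. -/
def iterOpt (f : ℕ × ℕ → Option (ℕ × ℕ)) (n : ℕ) (p : ℕ × ℕ) : Option (ℕ × ℕ) :=
  (fun o => o.bind f)^[n] (some p)

/-!
Starting from `(0, l₀)` with `l₀ = min l (a - k)`, the tensor product rule makes `f̃` lower the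
first factor for as long as `l₀ < a - k'`, which holds for the first `k` steps; from `(k, l₀)` on,
either `l₀ = l` and we are done, or `l₀ = a - k` and `f̃` lowers the second factor until `l` is
reached.
-/

lemma iterOpt_succ (f : ℕ × ℕ → Option (ℕ × ℕ)) (n : ℕ) (p : ℕ × ℕ) :
    iterOpt f (n + 1) p = (iterOpt f n p).bind f :=
  Function.iterate_succ_apply' _ n (some p)

lemma iterOpt_add (f : ℕ × ℕ → Option (ℕ × ℕ)) (m n : ℕ) (p : ℕ × ℕ) :
    iterOpt f (m + n) p = (iterOpt f m p).bind (iterOpt f n) := by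
  induction n with
  | zero => cases iterOpt f m p <;> rfl
  | succ n ih => simp only [← Nat.add_assoc, iterOpt_succ, ih, Option.bind_assoc]

section ftil

variable {a b k l : ℕ}

lemma ftil_of_lt (h : l < a - k) : ftil a b (k, l) = some (k + 1, l) :=
  if_pos h

lemma ftil_of_le (h : a - k ≤ l) (hb : l < b) : ftil a b (k, l) = some (k, l + 1) := by
  rw [ftil, if_neg h.not_gt, if_pos hb]

lemma iterOpt_ftil_of_add_le (n : ℕ) (h : k + n + l ≤ a) :
    iterOpt (ftil a b) n (k, l) = some (k + n, l) := by
  induction n with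
  | zero => rfl
  | succ n ih =>
    rw [iterOpt_succ, ih (by omega), Option.bind_some, ftil_of_lt (by omega), Nat.add_assoc]

lemma iterOpt_ftil_of_sub_le (n : ℕ) (h : a - k ≤ l) (hb : l + n ≤ b) :
    iterOpt (ftil a b) n (k, l) = some (k, l + n) := by
  induction n with
  | zero => rfl
  | succ n ih =>
    rw [iterOpt_succ, ih (by omega), Option.bind_some, ftil_of_le (by omega) (by omega),
      Nat.add_assoc]

end ftil

/-- Selection rule of the (q → 0)-Wigner–Eckart theorem (component identification):
for `k ≤ a`, `l ≤ b`, setting `l₀ = min l (a - k)`, one has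
`f̃^(k + l - l₀)(0, l₀) = some (k, l)`; that is, `(k, l)` lies in the connected component
whose highest weight satisfies `2J = a + b - 2·min l (a - k)`. -/
theorem crystal_WE_selection_rule (a b k l : ℕ) (hk : k ≤ a) (hl : l ≤ b) :
    iterOpt (ftil a b) (k + l - min l (a - k)) (0, min l (a - k)) = some (k, l) := by
  have hfst (l₀ : ℕ) (h : l₀ ≤ a - k) : iterOpt (ftil a b) k (0, l₀) = some (k, l₀) := by
    simpa using iterOpt_ftil_of_add_le (b := b) (k := 0) k (by omega)
  rcases le_or_gt l (a - k) with h | h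
  · rw [min_eq_left h, Nat.add_sub_cancel]
    exact hfst l h
  · rw [min_eq_right h.le, show k + l - (a - k) = k + (l - (a - k)) by omega, iterOpt_add,
      hfst _ le_rfl, Option.bind_some, iterOpt_ftil_of_sub_le _ le_rfl (by omega),
      Nat.add_sub_cancel' h.le]
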